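/- Fix γ ∈ (0,1), finitely many coordinates indexed by S×A, and i.i.d. mean-zero noise vectors {U_k} with ‖U_k‖_∞ ≤ 4γ/(1-γ) a.s. and coordinatewise variances Var(U_k(s,a)) = σ²(s,a), with coordinates independent. Define Q_0 = 0 and Q_{k+1} = (1-λ_k)Q_k + λ_k U_{k+1} with λ_k = 1/(1+(1-γ)k). Then P(‖Q_{k+1}‖_∞ > t) ≤ 2|S||A| exp( -t² / ( λ_k (8γ(1-γ)^{-1} t + 4‖σ²‖_∞) ) ). -/

import Mathlib

open MeasureTheory Real

/-- The rescaled linear step size `λ_k = 1/(1 + (1-γ)k)`. -/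
noncomputable def stepSize (γ : ℝ) (k : ℕ) : ℝ := 1 / (1 + (1 - γ) * k)

section StepSize
variable {γ : ℝ}

lemma stepSize_pos (hγ1 : γ < 1) (k : ℕ) : 0 < stepSize γ k := by
  have h : (0:ℝ) ≤ (1 - γ) * k := by
    have : (0:ℝ) ≤ 1 - γ := by linarith
    positivity
  rw [stepSize]; positivity

lemma stepSize_le_one (hγ1 : γ < 1) (k : ℕ) : stepSize γ k ≤ 1 := by
  have h : (0:ℝ) ≤ (1 - γ) * k := by
    have : (0:ℝ) ≤ 1 - γ := by linarith
    positivity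
  rw [stepSize, div_le_one (by linarith)]; linarith

lemma stepSize_zero' : stepSize γ 0 = 1 := by simp [stepSize]

lemma stepSize_succ_key (hγ0 : 0 < γ) (hγ1 : γ < 1) (k : ℕ) :
    (1 - stepSize γ (k+1)) * stepSize γ k ≤ stepSize γ (k+1) := by
  set a : ℝ := 1 + (1 - γ) * k with ha_def
  set b : ℝ := 1 + (1 - γ) * (k+1 : ℕ) with hb_def
  have hk : (0:ℝ) ≤ (1 - γ) * k := by
    have : (0:ℝ) ≤ 1 - γ := by linarith
    positivity
  have ha : 0 < a := by rw [ha_def]; linarith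
  have hb : 0 < b := by
    rw [hb_def]; push_cast; nlinarith
  have hba : b ≤ a + 1 := by rw [ha_def, hb_def]; push_cast; nlinarith
  have hs1 : stepSize γ (k+1) = 1 / b := rfl
  have hs2 : stepSize γ k = 1 / a := rfl
  rw [hs1, hs2]
  have he : (1 - 1/b) * (1/a) = (b - 1) / (b * a) := by
    field_simp
  rw [he, div_le_div_iff₀ (by positivity) hb]
  nlinarith

end StepSize

section ExpQuad

lemma exp_quad_nonpos {x : ℝ} (hx : x ≤ 0) : Real.exp x ≤ 1 + x + x ^ 2 / 2 := by
  have key : Antitone (fun z : ℝ => 1 + z + z ^ 2 / 2 - Real.exp z) := by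
    apply antitone_of_hasDerivAt_nonpos (f' := fun z => 1 + z - Real.exp z)
    · intro z
      have h1 : HasDerivAt (fun z : ℝ => 1 + z + z ^ 2 / 2 - Real.exp z)
          (0 + 1 + (2 * z ^ 1) / 2 - Real.exp z) z := by
        exact (((hasDerivAt_const z (1:ℝ)).add (hasDerivAt_id z)).add
          ((hasDerivAt_pow 2 z).div_const 2)).sub (Real.hasDerivAt_exp z)
      convert h1 using 1; ring
    · intro z
      have := Real.add_one_le_exp z
      simp only [Pi.zero_apply]
      linarith
  have h0 := key hx
  simp only [Real.exp_zero] at h0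
  nlinarith [h0]

lemma exp_quad_nonneg {x : ℝ} (hx : 0 ≤ x) : Real.exp x ≤ 1 + x + x ^ 2 * Real.exp x / 2 := by
  have key : MonotoneOn (fun z : ℝ => 1 + z + z ^ 2 * Real.exp z / 2 - Real.exp z)
      (Set.Ici (0:ℝ)) := by
    apply monotoneOn_of_hasDerivWithinAt_nonneg (convex_Ici 0)
      (f' := fun z => 1 + (2 * z ^ 1 * Real.exp z + z ^ 2 * Real.exp z) / 2 - Real.exp z)
    · apply Continuous.continuousOn; continuity
    · intro z _
      have h1 : HasDerivAt (fun z : ℝ => 1 + z + z ^ 2 * Real.exp z / 2 - Real.exp z)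
          (0 + 1 + (2 * z ^ 1 * Real.exp z + z ^ 2 * Real.exp z) / 2 - Real.exp z) z := by
        exact (((hasDerivAt_const z (1:ℝ)).add (hasDerivAt_id z)).add
          (((hasDerivAt_pow 2 z).mul (Real.hasDerivAt_exp z)).div_const 2)).sub
          (Real.hasDerivAt_exp z)
      have h1' : HasDerivAt (fun z : ℝ => 1 + z + z ^ 2 * Real.exp z / 2 - Real.exp z)
          (1 + (2 * z ^ 1 * Real.exp z + z ^ 2 * Real.exp z) / 2 - Real.exp z) z := by
        convert h1 using 1; ring
      exact h1'.hasDerivWithinAt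
    · intro z hz
      rw [interior_Ici] at hz
      have hz0 : (0:ℝ) < z := hz
      have h2 : (1 - z) * Real.exp z ≤ 1 := by
        have ha := Real.add_one_le_exp (-z)
        have hb : Real.exp (-z) * Real.exp z = 1 := by
          rw [← Real.exp_add]; simp
        nlinarith [mul_le_mul_of_nonneg_right ha (Real.exp_pos z).le]
      nlinarith [Real.exp_pos z, sq_nonneg z, mul_nonneg (sq_nonneg z) (Real.exp_pos z).le]
  have h0 := key (Set.self_mem_Ici) (Set.mem_Ici.mpr hx) hx
  simp only [Real.exp_zero] at h0
  nlinarith [h0]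

lemma exp_quad {x c : ℝ} (hxc : x ≤ c) (hc : 0 ≤ c) :
    Real.exp x ≤ 1 + x + x ^ 2 * Real.exp c / 2 := by
  rcases le_or_gt x 0 with h | h
  · have := exp_quad_nonpos h
    have hec : (1:ℝ) ≤ Real.exp c := Real.one_le_exp hc
    nlinarith [sq_nonneg x]
  · have h1 := exp_quad_nonneg h.le
    have hle : Real.exp x ≤ Real.exp c := Real.exp_le_exp.mpr hxc
    nlinarith [sq_nonneg x]

end ExpQuad

section MGF

variable {Ω : Type*} [MeasurableSpace Ω] {P : Measure Ω} [IsProbabilityMeasure P]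

lemma integrable_of_abs_le {X : Ω → ℝ} (hX : Measurable X) {C : ℝ}
    (hb : ∀ᵐ ω ∂P, |X ω| ≤ C) : Integrable X P :=
  Integrable.mono' (integrable_const C) hX.aestronglyMeasurable
    (by filter_upwards [hb] with ω h; simpa [Real.norm_eq_abs] using h)

lemma integrable_exp_of_abs_le {X : Ω → ℝ} (hX : Measurable X) {C : ℝ} (hC : 0 ≤ C)
    (hb : ∀ᵐ ω ∂P, |X ω| ≤ C) (s : ℝ) :
    Integrable (fun ω => Real.exp (s * X ω)) P := by
  apply integrable_of_abs_le ((hX.const_mul s).exp) (C := Real.exp (|s| * C))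
  filter_upwards [hb] with ω h
  rw [abs_of_nonneg (Real.exp_pos _).le, Real.exp_le_exp]
  calc s * X ω ≤ |s * X ω| := le_abs_self _
    _ = |s| * |X ω| := abs_mul _ _
    _ ≤ |s| * C := by gcongr

/-- Crude MGF bound for a bounded mean-zero random variable. -/
lemma mgf_crude {Y : Ω → ℝ} (hY : Measurable Y) {v B : ℝ} (hB : 0 ≤ B)
    (hm : ∫ ω, Y ω ∂P = 0) (hv : ∫ ω, (Y ω) ^ 2 ∂P = v)
    (hb : ∀ᵐ ω ∂P, |Y ω| ≤ B) (s : ℝ) :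
    ∫ ω, Real.exp (s * Y ω) ∂P ≤ Real.exp (s ^ 2 * v * Real.exp (|s| * B) / 2) := by
  set c : ℝ := s ^ 2 * Real.exp (|s| * B) / 2 with hc_def
  have intY : Integrable Y P := integrable_of_abs_le hY hb
  have intY2 : Integrable (fun ω => (Y ω) ^ 2) P := by
    apply integrable_of_abs_le (hY.pow_const 2) (C := B ^ 2)
    filter_upwards [hb] with ω h
    rw [abs_pow]
    exact pow_le_pow_left₀ (abs_nonneg _) h 2
  have intExp : Integrable (fun ω => Real.exp (s * Y ω)) P :=
    integrable_exp_of_abs_le hY hB hb s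
  have hpt : ∀ᵐ ω ∂P, Real.exp (s * Y ω) ≤ 1 + s * Y ω + c * (Y ω) ^ 2 := by
    filter_upwards [hb] with ω hω
    have h1 : s * Y ω ≤ |s| * B := by
      calc s * Y ω ≤ |s * Y ω| := le_abs_self _
        _ = |s| * |Y ω| := abs_mul _ _
        _ ≤ |s| * B := by gcongr
    have h2 := exp_quad h1 (by positivity)
    calc Real.exp (s * Y ω) ≤ 1 + s * Y ω + (s * Y ω) ^ 2 * Real.exp (|s| * B) / 2 := h2
      _ = 1 + s * Y ω + c * (Y ω) ^ 2 := by rw [hc_def]; ring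
  have hint : ∫ ω, Real.exp (s * Y ω) ∂P ≤ ∫ ω, (1 + s * Y ω + c * (Y ω) ^ 2) ∂P := by
    apply integral_mono_ae intExp ?_ hpt
    exact ((integrable_const 1).add (intY.const_mul s)).add (intY2.const_mul c)
  have g0 : Integrable (fun ω => s * Y ω) P := intY.const_mul s
  have g1 : Integrable (fun ω => 1 + s * Y ω) P := (integrable_const 1).add g0
  have g2 : Integrable (fun ω => c * (Y ω) ^ 2) P := intY2.const_mul c
  have hcalc : ∫ ω, (1 + s * Y ω + c * (Y ω) ^ 2) ∂P = 1 + c * v := by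
    rw [integral_add g1 g2, integral_add (integrable_const 1) g0,
      integral_const, integral_const_mul, integral_const_mul, hm, hv]
    simp
  rw [hcalc] at hint
  calc ∫ ω, Real.exp (s * Y ω) ∂P ≤ 1 + c * v := hint
    _ ≤ Real.exp (c * v) := by linarith [Real.add_one_le_exp (c * v)]
    _ = Real.exp (s ^ 2 * v * Real.exp (|s| * B) / 2) := by rw [hc_def]; ring_nf

end MGF

section Combine

/-- The exponent combination inequality for the induction step. -/
lemma combine_exp {s lam lamk B sig sigbar : ℝ}
    (hlam0 : 0 < lam) (hlam1 : lam ≤ 1) (hlamk0 : 0 < lamk) (hlamk1 : lamk ≤ 1)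
    (hkey : (1 - lam) * lamk ≤ lam)
    (hsig0 : 0 ≤ sig) (hsig : sig ≤ sigbar) (hB : 0 ≤ B) :
    (s * (1 - lam)) ^ 2 * sigbar * lamk * Real.exp (|s * (1 - lam)| * lamk * B) / 2
      + (s * lam) ^ 2 * sig * Real.exp (|s * lam| * B) / 2
      ≤ s ^ 2 * sigbar * lam * Real.exp (|s| * lam * B) / 2 := by
  have hsigbar : 0 ≤ sigbar := le_trans hsig0 hsig
  have habs1 : |s * (1 - lam)| = |s| * (1 - lam) := by
    rw [abs_mul, abs_of_nonneg (by linarith : (0:ℝ) ≤ 1 - lam)]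
  have habs2 : |s * lam| = |s| * lam := by
    rw [abs_mul, abs_of_nonneg hlam0.le]
  rw [habs1, habs2]
  set E : ℝ := Real.exp (|s| * lam * B) with hE_def
  have hE1 : Real.exp (|s| * (1 - lam) * lamk * B) ≤ E := by
    rw [hE_def, Real.exp_le_exp]
    have h1 : (1 - lam) * lamk ≤ lam := hkey
    nlinarith [abs_nonneg s, mul_nonneg (abs_nonneg s) hB]
  have hE2 : Real.exp (|s| * lam * B) = E := rfl
  have hEpos : 0 < E := Real.exp_pos _
  have t1 : (s * (1 - lam)) ^ 2 * sigbar * lamk * Real.exp (|s| * (1 - lam) * lamk * B) / 2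
      ≤ s ^ 2 * ((1 - lam) ^ 2 * lamk) * sigbar * E / 2 := by
    have : (s * (1 - lam)) ^ 2 * sigbar * lamk = s ^ 2 * ((1 - lam) ^ 2 * lamk) * sigbar := by
      ring
    rw [this]
    gcongr <;> positivity
  have t2 : (s * lam) ^ 2 * sig * Real.exp (|s| * lam * B) / 2
      ≤ s ^ 2 * lam ^ 2 * sigbar * E / 2 := by
    rw [hE2]
    have h : (s * lam) ^ 2 * sig ≤ s ^ 2 * lam ^ 2 * sigbar := by nlinarith [sq_nonneg s]
    nlinarith [hEpos]
  have hcoef : (1 - lam) ^ 2 * lamk + lam ^ 2 ≤ lam := by nlinarith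
  have t3 : s ^ 2 * ((1 - lam) ^ 2 * lamk) * sigbar * E / 2 + s ^ 2 * lam ^ 2 * sigbar * E / 2
      ≤ s ^ 2 * sigbar * lam * E / 2 := by
    have hterm : ((1 - lam) ^ 2 * lamk + lam ^ 2) * (s ^ 2 * sigbar * E) ≤
        lam * (s ^ 2 * sigbar * E) := by
      apply mul_le_mul_of_nonneg_right hcoef
      positivity
    nlinarith [hterm]
  linarith

/-- The Chernoff optimization inequality with `s = 4t/D`, `D = λ(2Bt+4σ̄)`. -/
lemma chernoff_alg {B sb t lam : ℝ} (hB : 0 < B) (hsb : 0 ≤ sb) (ht : 0 < t) (hlam : 0 < lam) :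
    -(4 * t / (lam * (2 * B * t + 4 * sb))) * t
      + (4 * t / (lam * (2 * B * t + 4 * sb))) ^ 2 * sb * lam *
        Real.exp ((4 * t / (lam * (2 * B * t + 4 * sb))) * lam * B) / 2
      ≤ -t ^ 2 / (lam * (2 * B * t + 4 * sb)) := by
  set E : ℝ := 2 * B * t + 4 * sb with hE_def
  have hE : 0 < E := by rw [hE_def]; nlinarith
  set D : ℝ := lam * E with hD_def
  have hD : 0 < D := by positivity
  set s : ℝ := 4 * t / D with hs_def
  set q : ℝ := 4 * B * t / E with hq_def
  have hsArg : s * lam * B = q := by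
    rw [hs_def, hq_def, hD_def]
    rw [div_mul_eq_mul_div, div_mul_eq_mul_div, div_eq_div_iff (by positivity) hE.ne']
    ring
  have hq2 : (2 - q) * E = 8 * sb := by
    rw [hq_def]
    field_simp
    rw [hE_def]; ring
  have hqe : (2 - q) * Real.exp q ≤ Real.exp 1 := by
    have h := Real.add_one_le_exp (1 - q)
    have h2 : Real.exp (1 - q) * Real.exp q = Real.exp 1 := by
      rw [← Real.exp_add]; ring_nf
    nlinarith [Real.exp_pos q, mul_le_mul_of_nonneg_right h (Real.exp_pos q).le]
  have he3 : Real.exp 1 ≤ 3 := by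
    have := Real.exp_one_lt_d9
    nlinarith
  have hkey : 8 * sb * Real.exp q ≤ 3 * E := by
    calc 8 * sb * Real.exp q = (2 - q) * E * Real.exp q := by rw [hq2]
      _ = ((2 - q) * Real.exp q) * E := by ring
      _ ≤ Real.exp 1 * E := by
          apply mul_le_mul_of_nonneg_right hqe hE.le
      _ ≤ 3 * E := by nlinarith
  rw [hsArg]
  have h1 : s ^ 2 * sb * lam * Real.exp q / 2 ≤ 3 * t ^ 2 / D := by
    have heq : s ^ 2 * sb * lam * Real.exp q / 2 = (8 * sb * Real.exp q) * lam * t ^ 2 / D ^ 2 := by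
      rw [hs_def]
      rw [div_pow, div_mul_eq_mul_div, div_mul_eq_mul_div, div_mul_eq_mul_div, div_div]
      rw [div_eq_div_iff (by positivity) (by positivity)]
      ring
    have heq2 : (3 * E) * lam * t ^ 2 / D ^ 2 = 3 * t ^ 2 / D := by
      rw [div_eq_div_iff (by positivity) hD.ne']
      rw [hD_def]; ring
    rw [heq, ← heq2]
    gcongr
  have h2 : -s * t = -(4 * t ^ 2 / D) := by
    rw [hs_def]; rw [neg_mul, neg_inj, div_mul_eq_mul_div]; ring_nf
  have h3 : -(4 * t ^ 2 / D) + 3 * t ^ 2 / D = -t ^ 2 / D := by ring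
  linarith

end Combine

section ArComb

/-- The autoregressive combination as an explicit function of the noise vectors. -/
noncomputable def arComb (γ : ℝ) {β : Type*} : (k : ℕ) → (Fin (k + 2) → β → ℝ) → β → ℝ
  | 0, v => fun b => stepSize γ 0 * v 1 b
  | (k+1), v => fun b => (1 - stepSize γ (k+1)) * arComb γ k (fun i => v i.castSucc) b
      + stepSize γ (k+1) * v (Fin.last (k+2)) b

lemma arComb_measurable (γ : ℝ) {β : Type*} :
    ∀ k, Measurable (fun v : Fin (k + 2) → β → ℝ => arComb γ k v) := by
  intro k
  induction k with
  | zero =>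
    apply measurable_pi_lambda
    intro b
    simp only [arComb]
    have h : Measurable fun v : Fin 2 → β → ℝ => v 1 b :=
      (measurable_pi_apply b).comp (measurable_pi_apply 1)
    exact h.const_mul (stepSize γ 0)
  | succ k ih =>
    apply measurable_pi_lambda
    intro b
    simp only [arComb]
    have hrestr : Measurable (fun v : Fin (k+3) → β → ℝ => fun i : Fin (k+2) => v i.castSucc) :=
      measurable_pi_lambda _ (fun i => measurable_pi_apply i.castSucc)
    have h1 : Measurable (fun v : Fin (k+3) → β → ℝ =>
        arComb γ k (fun i => v i.castSucc) b) :=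
      (measurable_pi_apply b).comp (ih.comp hrestr)
    have h2 : Measurable (fun v : Fin (k+3) → β → ℝ => v (Fin.last (k+2)) b) :=
      (measurable_pi_apply b).comp (measurable_pi_apply _)
    exact (h1.const_mul (1 - stepSize γ (k+1))).add (h2.const_mul (stepSize γ (k+1)))

end ArComb


/-- Tail bound for the sup norm of the autoregressive averaged noise sequence
`Q_{k+1} = (1-λ_k)Q_k + λ_k U_{k+1}` with i.i.d. bounded mean-zero noise vectors
whose coordinates are independent:
`P(‖Q_{k+1}‖_∞ > t) ≤ 2|S||A| exp(-t²/(λ_k(8γ(1-γ)⁻¹t + 4‖σ²‖_∞)))`. -/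
theorem ar_sup_tail_bound {Ω S A : Type*} [MeasurableSpace Ω]
    [Fintype S] [Fintype A] [Nonempty S] [Nonempty A]
    (P : Measure Ω) [IsProbabilityMeasure P]
    (γ : ℝ) (hγ0 : 0 < γ) (hγ1 : γ < 1)
    (U : ℕ → Ω → S × A → ℝ)
    (hmeas : ∀ k, Measurable (U k))
    (hindep : ProbabilityTheory.iIndepFun U P)
    (hident : ∀ k, Measure.map (U k) P = Measure.map (U 0) P)
    (hmean : ∀ k sa, ∫ ω, U k ω sa ∂P = 0)
    (hbdd : ∀ k, ∀ᵐ ω ∂P, ‖U k ω‖ ≤ 4 * γ / (1 - γ))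
    (σ2 : S × A → ℝ)
    (hvar : ∀ k sa, ∫ ω, (U k ω sa) ^ 2 ∂P = σ2 sa)
    (hcoord : ∀ k, ProbabilityTheory.iIndepFun
      (fun sa ω => U k ω sa) P)
    (Q : ℕ → Ω → S × A → ℝ)
    (hQ0 : Q 0 = fun _ _ => 0)
    (hQ : ∀ k, Q (k + 1) = fun ω sa =>
      (1 - stepSize γ k) * Q k ω sa + stepSize γ k * U (k + 1) ω sa) :
    ∀ k, ∀ t : ℝ, 0 < t →
      (P {ω | t < ‖Q (k + 1) ω‖}).toReal ≤
        2 * Fintype.card S * Fintype.card A *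
          Real.exp (-t ^ 2 /
            (stepSize γ k * (8 * γ / (1 - γ) * t + 4 * (⨆ sa, σ2 sa)))) := by
  have h1γ : (0:ℝ) < 1 - γ := by linarith
  set B : ℝ := 4 * γ / (1 - γ) with hB_def
  have hBpos : 0 < B := by rw [hB_def]; positivity
  set sbar : ℝ := ⨆ sa, σ2 sa with hsbar_def
  have hσ2nonneg : ∀ sa, 0 ≤ σ2 sa := fun sa => by
    rw [← hvar 0 sa]; exact integral_nonneg fun ω => sq_nonneg _
  have hσ2le : ∀ sa, σ2 sa ≤ sbar := fun sa =>
    le_ciSup (Set.Finite.bddAbove (Set.finite_range σ2)) sa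
  have hsbar0 : 0 ≤ sbar :=
    le_trans (hσ2nonneg (Classical.arbitrary _)) (hσ2le (Classical.arbitrary _))
  have hUb : ∀ m sa, ∀ᵐ ω ∂P, |U m ω sa| ≤ B := by
    intro m sa
    filter_upwards [hbdd m] with ω h
    calc |U m ω sa| = ‖U m ω sa‖ := (Real.norm_eq_abs _).symm
      _ ≤ ‖U m ω‖ := norm_le_pi_norm _ sa
      _ ≤ B := h
  have hUmeas : ∀ m sa, Measurable fun ω => U m ω sa := fun m sa =>
    (measurable_pi_apply sa).comp (hmeas m)
  have hQmeas : ∀ m sa, Measurable fun ω => Q m ω sa := by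
    intro m
    induction m with
    | zero => intro sa; simp only [hQ0]; exact measurable_const
    | succ m ih =>
      intro sa
      simp only [hQ m]
      exact ((ih sa).const_mul _).add ((hUmeas (m+1) sa).const_mul _)
  have hQbdd : ∀ m, ∀ᵐ ω ∂P, ∀ sa, |Q m ω sa| ≤ B := by
    intro m
    induction m with
    | zero =>
      filter_upwards with ω sa
      simp only [hQ0, abs_zero]
      exact hBpos.le
    | succ m ih =>
      filter_upwards [ih, hbdd m.succ] with ω h1 h2
      intro sa
      have hU : |U (m+1) ω sa| ≤ B := by
        calc |U (m+1) ω sa| = ‖U (m+1) ω sa‖ := (Real.norm_eq_abs _).symm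
          _ ≤ ‖U (m+1) ω‖ := norm_le_pi_norm _ sa
          _ ≤ B := h2
      have hsp := stepSize_pos hγ1 m
      have hsl := stepSize_le_one hγ1 m
      simp only [hQ m]
      calc |(1 - stepSize γ m) * Q m ω sa + stepSize γ m * U (m+1) ω sa|
          ≤ |(1 - stepSize γ m) * Q m ω sa| + |stepSize γ m * U (m+1) ω sa| := abs_add_le _ _
        _ = (1 - stepSize γ m) * |Q m ω sa| + stepSize γ m * |U (m+1) ω sa| := by
            rw [abs_mul, abs_mul, abs_of_nonneg (by linarith : (0:ℝ) ≤ 1 - stepSize γ m),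
              abs_of_nonneg hsp.le]
        _ ≤ (1 - stepSize γ m) * B + stepSize γ m * B :=
            add_le_add (mul_le_mul_of_nonneg_left (h1 sa) (by linarith))
              (mul_le_mul_of_nonneg_left hU hsp.le)
        _ = B := by ring
  -- representation of Q (m+1) as a measurable function of U 0, ..., U (m+1)
  have hrep : ∀ m (ω : Ω), Q (m+1) ω = arComb γ m (fun i : Fin (m+2) => U i ω) := by
    intro m
    induction m with
    | zero =>
      intro ω; funext sa
      simp only [hQ 0, hQ0, arComb, stepSize_zero']
      norm_num
    | succ m ih =>
      intro ω; funext sa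
      have e1 : (fun i : Fin (m+2) => U ((i.castSucc : Fin (m+3)) : ℕ) ω) =
          fun i : Fin (m+2) => U (i : ℕ) ω := by
        funext i; simp [Fin.coe_castSucc]
      simp only [hQ (m+1), arComb, ih ω, Fin.val_last, e1]
  -- independence of Q (m+1) from U (m+2)
  have hindQ : ∀ m, ProbabilityTheory.IndepFun (Q (m+1)) (U (m+2)) P := by
    intro m
    have hdisj : Disjoint (Finset.range (m+2)) ({m+2} : Finset ℕ) := by
      simp [Finset.disjoint_singleton_right]
    have base := hindep.indepFun_finset (Finset.range (m+2)) {m+2} hdisj hmeas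
    have hφ : Measurable (fun v : (i : (Finset.range (m+2) : Finset ℕ)) → (S × A → ℝ) =>
        arComb γ m (fun i : Fin (m+2) => v ⟨(i : ℕ), Finset.mem_range.mpr i.isLt⟩)) :=
      (arComb_measurable γ m).comp
        (measurable_pi_lambda _ (fun i => measurable_pi_apply _))
    have hψ : Measurable (fun v : (i : ({m+2} : Finset ℕ)) → (S × A → ℝ) =>
        v ⟨m+2, Finset.mem_singleton_self _⟩) := measurable_pi_apply _
    have hcomp := base.comp hφ hψ
    have heq1 : Q (m+1) =
        (fun v : (i : (Finset.range (m+2) : Finset ℕ)) → (S × A → ℝ) =>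
          arComb γ m (fun i : Fin (m+2) => v ⟨(i : ℕ), Finset.mem_range.mpr i.isLt⟩)) ∘
          (fun a (i : (Finset.range (m+2) : Finset ℕ)) => U i a) := by
      funext ω; exact hrep m ω
    have heq2 : U (m+2) =
        (fun v : (i : ({m+2} : Finset ℕ)) → (S × A → ℝ) =>
          v ⟨m+2, Finset.mem_singleton_self _⟩) ∘
          (fun a (i : ({m+2} : Finset ℕ)) => U i a) := rfl
    rw [heq1, heq2]
    exact hcomp
  -- MGF bound by induction
  have hmgf : ∀ m sa (s : ℝ), ∫ ω, Real.exp (s * Q (m+1) ω sa) ∂P ≤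
      Real.exp (s ^ 2 * sbar * stepSize γ m *
        Real.exp (|s| * stepSize γ m * B) / 2) := by
    intro m
    induction m with
    | zero =>
      intro sa s
      have hQ1 : ∀ ω, Q 1 ω sa = U 1 ω sa := by
        intro ω; simp only [hQ 0, hQ0, stepSize_zero']; ring
      have hb := mgf_crude (hUmeas 1 sa) hBpos.le (hmean 1 sa) (hvar 1 sa) (hUb 1 sa) s
      calc ∫ ω, Real.exp (s * Q 1 ω sa) ∂P = ∫ ω, Real.exp (s * U 1 ω sa) ∂P := by
            congr 1; funext ω; rw [hQ1 ω]
        _ ≤ Real.exp (s ^ 2 * σ2 sa * Real.exp (|s| * B) / 2) := hb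
        _ ≤ Real.exp (s ^ 2 * sbar * stepSize γ 0 *
              Real.exp (|s| * stepSize γ 0 * B) / 2) := by
            rw [stepSize_zero']
            apply Real.exp_le_exp.mpr
            simp only [mul_one, one_mul]
            gcongr
            exact hσ2le sa
    | succ m ih =>
      intro sa s
      have hl'0 := stepSize_pos hγ1 (m+1)
      have hl'1 := stepSize_le_one hγ1 (m+1)
      have hk0 := stepSize_pos hγ1 m
      have hk1 := stepSize_le_one hγ1 m
      have hsplit : ∀ ω, Real.exp (s * Q (m+1+1) ω sa) =
          Real.exp ((s * (1 - stepSize γ (m+1))) * Q (m+1) ω sa) *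
          Real.exp ((s * stepSize γ (m+1)) * U (m+2) ω sa) := by
        intro ω
        rw [← Real.exp_add]
        congr 1
        simp only [hQ (m+1)]
        ring
      have hQb : ∀ᵐ ω ∂P, |Q (m+1) ω sa| ≤ B := (hQbdd (m+1)).mono fun ω h => h sa
      have int1 : Integrable
          (fun ω => Real.exp ((s * (1 - stepSize γ (m+1))) * Q (m+1) ω sa)) P :=
        integrable_exp_of_abs_le (hQmeas (m+1) sa) hBpos.le hQb _
      have int2 : Integrable
          (fun ω => Real.exp ((s * stepSize γ (m+1)) * U (m+2) ω sa)) P :=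
        integrable_exp_of_abs_le (hUmeas (m+2) sa) hBpos.le (hUb (m+2) sa) _
      have hindco : ProbabilityTheory.IndepFun
          (fun ω => Real.exp ((s * (1 - stepSize γ (m+1))) * Q (m+1) ω sa))
          (fun ω => Real.exp ((s * stepSize γ (m+1)) * U (m+2) ω sa)) P := by
        have hm1 : Measurable (fun f : S × A → ℝ =>
            Real.exp ((s * (1 - stepSize γ (m+1))) * f sa)) :=
          ((measurable_pi_apply sa).const_mul _).exp
        have hm2 : Measurable (fun f : S × A → ℝ =>
            Real.exp ((s * stepSize γ (m+1)) * f sa)) :=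
          ((measurable_pi_apply sa).const_mul _).exp
        exact (hindQ m).comp hm1 hm2
      calc ∫ ω, Real.exp (s * Q (m+1+1) ω sa) ∂P
          = ∫ ω, Real.exp ((s * (1 - stepSize γ (m+1))) * Q (m+1) ω sa) *
              Real.exp ((s * stepSize γ (m+1)) * U (m+2) ω sa) ∂P := by
            congr 1; funext ω; exact hsplit ω
        _ = (∫ ω, Real.exp ((s * (1 - stepSize γ (m+1))) * Q (m+1) ω sa) ∂P) *
            (∫ ω, Real.exp ((s * stepSize γ (m+1)) * U (m+2) ω sa) ∂P) :=
            hindco.integral_fun_mul_eq_mul_integral int1.aestronglyMeasurable int2.aestronglyMeasurable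
        _ ≤ Real.exp ((s * (1 - stepSize γ (m+1))) ^ 2 * sbar * stepSize γ m *
              Real.exp (|s * (1 - stepSize γ (m+1))| * stepSize γ m * B) / 2) *
            Real.exp ((s * stepSize γ (m+1)) ^ 2 * σ2 sa *
              Real.exp (|s * stepSize γ (m+1)| * B) / 2) := by
            apply mul_le_mul (ih sa (s * (1 - stepSize γ (m+1))))
              (mgf_crude (hUmeas (m+2) sa) hBpos.le (hmean (m+2) sa) (hvar (m+2) sa)
                (hUb (m+2) sa) (s * stepSize γ (m+1)))
              (integral_nonneg fun ω => (Real.exp_pos _).le) (Real.exp_pos _).le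
        _ = Real.exp ((s * (1 - stepSize γ (m+1))) ^ 2 * sbar * stepSize γ m *
              Real.exp (|s * (1 - stepSize γ (m+1))| * stepSize γ m * B) / 2
              + (s * stepSize γ (m+1)) ^ 2 * σ2 sa *
              Real.exp (|s * stepSize γ (m+1)| * B) / 2) := (Real.exp_add _ _).symm
        _ ≤ Real.exp (s ^ 2 * sbar * stepSize γ (m+1) *
              Real.exp (|s| * stepSize γ (m+1) * B) / 2) := by
            apply Real.exp_le_exp.mpr
            exact combine_exp hl'0 hl'1 hk0 hk1 (stepSize_succ_key hγ0 hγ1 m)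
              (hσ2nonneg sa) (hσ2le sa) hBpos.le
  -- Chernoff bound per coordinate
  intro k t ht
  have hlamk := stepSize_pos hγ1 k
  have hEpos : (0:ℝ) < 2 * B * t + 4 * sbar := by nlinarith
  set D : ℝ := stepSize γ k * (2 * B * t + 4 * sbar) with hD_def
  have hDpos : 0 < D := by rw [hD_def]; positivity
  set s : ℝ := 4 * t / D with hs_def
  have hs0 : 0 ≤ s := by positivity
  have habs : |s| = s := abs_of_nonneg hs0
  have hexp_bound : -s * t + s ^ 2 * sbar * stepSize γ k *
      Real.exp (s * stepSize γ k * B) / 2 ≤ -t ^ 2 / D := by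
    rw [hs_def, hD_def]
    exact chernoff_alg hBpos hsbar0 ht hlamk
  have tailpos : ∀ sa : S × A,
      (P {ω | t ≤ Q (k+1) ω sa}).toReal ≤ Real.exp (-t ^ 2 / D) := by
    intro sa
    have hQb : ∀ᵐ ω ∂P, |Q (k+1) ω sa| ≤ B := (hQbdd (k+1)).mono fun ω h => h sa
    have hint : Integrable (fun ω => Real.exp (s * Q (k+1) ω sa)) P :=
      integrable_exp_of_abs_le (hQmeas (k+1) sa) hBpos.le hQb s
    have h1 := ProbabilityTheory.measure_ge_le_exp_mul_mgf
      (X := fun ω => Q (k+1) ω sa) (μ := P) t hs0 hint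
    have h2 : ProbabilityTheory.mgf (fun ω => Q (k+1) ω sa) P s ≤
        Real.exp (s ^ 2 * sbar * stepSize γ k * Real.exp (|s| * stepSize γ k * B) / 2) := by
      rw [ProbabilityTheory.mgf]
      exact hmgf k sa s
    calc (P {ω | t ≤ Q (k+1) ω sa}).toReal
        ≤ Real.exp (-s * t) * ProbabilityTheory.mgf (fun ω => Q (k+1) ω sa) P s := h1
      _ ≤ Real.exp (-s * t) * Real.exp (s ^ 2 * sbar * stepSize γ k *
            Real.exp (|s| * stepSize γ k * B) / 2) :=
          mul_le_mul_of_nonneg_left h2 (Real.exp_pos _).le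
      _ = Real.exp (-s * t + s ^ 2 * sbar * stepSize γ k *
            Real.exp (|s| * stepSize γ k * B) / 2) := (Real.exp_add _ _).symm
      _ ≤ Real.exp (-t ^ 2 / D) := by
          apply Real.exp_le_exp.mpr
          rw [habs]
          exact hexp_bound
  have tailneg : ∀ sa : S × A,
      (P {ω | t ≤ -(Q (k+1) ω sa)}).toReal ≤ Real.exp (-t ^ 2 / D) := by
    intro sa
    have hQb : ∀ᵐ ω ∂P, |-(Q (k+1) ω sa)| ≤ B := by
      filter_upwards [hQbdd (k+1)] with ω h
      rw [abs_neg]; exact h sa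
    have hint : Integrable (fun ω => Real.exp (s * -(Q (k+1) ω sa))) P :=
      integrable_exp_of_abs_le ((hQmeas (k+1) sa).neg) hBpos.le hQb s
    have h1 := ProbabilityTheory.measure_ge_le_exp_mul_mgf
      (X := fun ω => -(Q (k+1) ω sa)) (μ := P) t hs0 hint
    have h2 : ProbabilityTheory.mgf (fun ω => -(Q (k+1) ω sa)) P s ≤
        Real.exp (s ^ 2 * sbar * stepSize γ k * Real.exp (|s| * stepSize γ k * B) / 2) := by
      rw [ProbabilityTheory.mgf]
      have he : ∫ ω, Real.exp (s * -(Q (k+1) ω sa)) ∂P =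
          ∫ ω, Real.exp ((-s) * Q (k+1) ω sa) ∂P := by
        congr 1; funext ω; ring_nf
      calc (∫ ω, Real.exp (s * -(Q (k+1) ω sa)) ∂P)
          = ∫ ω, Real.exp ((-s) * Q (k+1) ω sa) ∂P := he
        _ ≤ Real.exp ((-s) ^ 2 * sbar * stepSize γ k *
              Real.exp (|(-s)| * stepSize γ k * B) / 2) := hmgf k sa (-s)
        _ = Real.exp (s ^ 2 * sbar * stepSize γ k *
              Real.exp (|s| * stepSize γ k * B) / 2) := by rw [abs_neg, neg_pow]; ring_nf
    calc (P {ω | t ≤ -(Q (k+1) ω sa)}).toReal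
        ≤ Real.exp (-s * t) * ProbabilityTheory.mgf (fun ω => -(Q (k+1) ω sa)) P s := h1
      _ ≤ Real.exp (-s * t) * Real.exp (s ^ 2 * sbar * stepSize γ k *
            Real.exp (|s| * stepSize γ k * B) / 2) :=
          mul_le_mul_of_nonneg_left h2 (Real.exp_pos _).le
      _ = Real.exp (-s * t + s ^ 2 * sbar * stepSize γ k *
            Real.exp (|s| * stepSize γ k * B) / 2) := (Real.exp_add _ _).symm
      _ ≤ Real.exp (-t ^ 2 / D) := by
          apply Real.exp_le_exp.mpr
          rw [habs]
          exact hexp_bound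
  -- union bound
  have hsubset : {ω | t < ‖Q (k+1) ω‖} ⊆
      ⋃ sa : S × A, ({ω | t ≤ Q (k+1) ω sa} ∪ {ω | t ≤ -(Q (k+1) ω sa)}) := by
    intro ω hω
    simp only [Set.mem_setOf_eq] at hω
    by_contra hc
    simp only [Set.mem_iUnion, Set.mem_union, Set.mem_setOf_eq, not_exists, not_or,
      not_le] at hc
    have hn : ‖Q (k+1) ω‖ ≤ t := by
      rw [pi_norm_le_iff_of_nonneg ht.le]
      intro sa
      have h := hc sa
      rw [Real.norm_eq_abs, abs_le]
      constructor
      · linarith [h.2]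
      · linarith [h.1]
    linarith
  have key : P {ω | t < ‖Q (k+1) ω‖} ≤
      ∑ sa : S × A, (P {ω | t ≤ Q (k+1) ω sa} + P {ω | t ≤ -(Q (k+1) ω sa)}) := by
    refine le_trans (measure_mono hsubset) ?_
    refine le_trans (measure_iUnion_le _) ?_
    rw [tsum_fintype]
    exact Finset.sum_le_sum fun sa _ => measure_union_le _ _
  have hne : ∀ sa ∈ Finset.univ (α := S × A),
      P {ω | t ≤ Q (k+1) ω sa} + P {ω | t ≤ -(Q (k+1) ω sa)} ≠ ⊤ := by
    intro sa _
    exact (ENNReal.add_lt_top.mpr ⟨measure_lt_top P _, measure_lt_top P _⟩).ne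
  have hDD : stepSize γ k * (8 * γ / (1-γ) * t + 4 * sbar) = D := by
    rw [hD_def, hB_def]; ring
  rw [hDD]
  calc (P {ω | t < ‖Q (k+1) ω‖}).toReal
      ≤ (∑ sa : S × A, (P {ω | t ≤ Q (k+1) ω sa} + P {ω | t ≤ -(Q (k+1) ω sa)})).toReal :=
        ENNReal.toReal_mono
          ((ENNReal.sum_lt_top.mpr fun sa hsa => (hne sa hsa).lt_top).ne) key
    _ = ∑ sa : S × A, ((P {ω | t ≤ Q (k+1) ω sa}).toReal +
          (P {ω | t ≤ -(Q (k+1) ω sa)}).toReal) := by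
        rw [ENNReal.toReal_sum hne]
        refine Finset.sum_congr rfl fun sa _ => ?_
        rw [ENNReal.toReal_add (measure_ne_top P _) (measure_ne_top P _)]
    _ ≤ ∑ _sa : S × A, (2 * Real.exp (-t ^ 2 / D)) := by
        refine Finset.sum_le_sum fun sa _ => ?_
        have := tailpos sa
        have := tailneg sa
        linarith
    _ = (Fintype.card (S × A) : ℝ) * (2 * Real.exp (-t ^ 2 / D)) := by
        rw [Finset.sum_const, Finset.card_univ, nsmul_eq_mul]
    _ = 2 * Fintype.card S * Fintype.card A * Real.exp (-t ^ 2 / D) := by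
        rw [Fintype.card_prod]
        push_cast
        ring
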